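/- arXiv:1901.09158 — 4 statements merged into one kernel-verified Lean document; each statement's English description precedes it below -/
import Mathlib

section
/- Let T ∈ Tree(k) and T_j ∈ Tree(n_j) for j = 1,...,k, and let N = n_1 + ... + n_k. Then the composition T(T_1,...,T_k), defined as the set of strings obtained by taking a string i_1...i_ℓ in T and replacing each letter i_m by a nonempty string from T_{i_m} (with letters shifted by the canonical inclusions ι_j : [n_j] → [N]), is again a rooted subtree of T_{N,free}; in particular it is closed under taking final substrings and is connected. -/
/-- A rooted subtree of the tree of alternating strings on alphabet `α`:
a set of alternating strings containing the empty string and closed under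
deleting the first letter (equivalently, connected and containing the root). -/
def IsRootedSubtree {α : Type*} (S : Set (List α)) : Prop :=
  (∀ s ∈ S, s.Chain' (· ≠ ·)) ∧ [] ∈ S ∧ ∀ s ∈ S, s.tail ∈ S

/-- The operadic composition `T(T_1,…,T_k)` of rooted subtrees: strings are
obtained from a string `i_1 … i_ℓ` of `T` by replacing each letter `i_m` by a
nonempty string of `T_{i_m}`, with letters shifted into the disjoint union
alphabet `Σ i, Fin (n i)` (the canonical inclusions `ι_j : [n_j] → [N]`). -/
def Compose {k : ℕ} {n : Fin k → ℕ} (T : Set (List (Fin k)))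
    (Ts : ∀ i : Fin k, Set (List (Fin (n i)))) :
    Set (List (Σ i : Fin k, Fin (n i))) :=
  { w | ∃ c : List (Σ i : Fin k, List (Fin (n i))),
      c.map Sigma.fst ∈ T ∧ (∀ p ∈ c, p.2 ∈ Ts p.1 ∧ p.2 ≠ []) ∧
      w = c.foldr
        (fun p acc => p.2.map (fun x => (⟨p.1, x⟩ : Σ i : Fin k, Fin (n i))) ++ acc) [] }

/-!
A word of `T(T_1,…,T_k)` is a concatenation of nonempty blocks, the `m`-th one a word of
`T_{i_m}` shifted into the `i_m`-th summand. Inside a block consecutive letters differ because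
`T_{i_m}` consists of alternating words; at a block boundary they lie in different summands because
consecutive letters `i_m, i_{m+1}` of the word of `T` differ. Deleting the first letter either
shortens the first block, which stays in `T_{i_1}` by tail closure, or removes the block when it is
a single letter, which amounts to deleting the first letter `i_1` of the word of `T`.
-/

namespace Compose

variable {ι : Type*} {α : ι → Type*}

/-- `word [⟨i_1, s_1⟩, …, ⟨i_ℓ, s_ℓ⟩]` is the concatenation `(ι_{i_1})_*(s_1) ⋯ (ι_{i_ℓ})_*(s_ℓ)`. -/
def word (c : List (Σ i, List (α i))) : List (Σ i, α i) :=
  c.foldr (fun p acc => p.2.map (fun x => (⟨p.1, x⟩ : Σ i, α i)) ++ acc) []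

@[simp]
lemma word_cons (p : Σ i, List (α i)) (c : List (Σ i, List (α i))) :
    word (p :: c) = p.2.map (Sigma.mk p.1) ++ word c := rfl

lemma word_eq_flatten (c : List (Σ i, List (α i))) :
    word c = (c.map fun p => p.2.map (Sigma.mk p.1)).flatten := by
  induction c with
  | nil => rfl
  | cons p c ih => simp [ih]

lemma tail_word_cons (i : ι) (a : α i) (t : List (α i)) (c : List (Σ i, List (α i))) :
    (word (⟨i, a :: t⟩ :: c)).tail = word (⟨i, t⟩ :: c) := rfl

lemma isChain_ne_word {c : List (Σ i, List (α i))} (hne : ∀ p ∈ c, p.2 ≠ [])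
    (hblocks : ∀ p ∈ c, p.2.IsChain (· ≠ ·)) (hidx : (c.map Sigma.fst).IsChain (· ≠ ·)) :
    (word c).IsChain (· ≠ ·) := by
  have hnil : [] ∉ c.map fun p => p.2.map (Sigma.mk p.1) := by
    intro hmem
    obtain ⟨p, hp, hp_nil⟩ := List.mem_map.1 hmem
    exact hne p hp (List.map_eq_nil_iff.1 hp_nil)
  rw [word_eq_flatten, List.isChain_flatten hnil, List.isChain_map]
  refine ⟨?_, ?_⟩
  · simp only [List.mem_map, forall_exists_index, and_imp, forall_apply_eq_imp_iff₂,
      List.isChain_map]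
    exact fun p hp => (hblocks p hp).imp fun _ _ h heq => h (by simpa using heq)
  · refine ((List.isChain_map Sigma.fst).1 hidx).imp fun p q hpq x hx y hy heq => hpq ?_
    rw [List.getLast?_map, Option.mem_map] at hx
    rw [List.head?_map, Option.mem_map] at hy
    obtain ⟨_, _, rfl⟩ := hx
    obtain ⟨_, _, rfl⟩ := hy
    exact (Sigma.mk.inj_iff.1 heq).1

end Compose

open Compose

section

variable {k : ℕ} {n : Fin k → ℕ} {T : Set (List (Fin k))}
  {Ts : ∀ i : Fin k, Set (List (Fin (n i)))}

lemma mem_compose_iff {w : List (Σ i : Fin k, Fin (n i))} :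
    w ∈ Compose T Ts ↔ ∃ c : List (Σ i : Fin k, List (Fin (n i))),
      c.map Sigma.fst ∈ T ∧ (∀ p ∈ c, p.2 ∈ Ts p.1 ∧ p.2 ≠ []) ∧ w = word c :=
  Iff.rfl

lemma nil_mem_compose (hT : [] ∈ T) : [] ∈ Compose T Ts :=
  mem_compose_iff.2 ⟨[], hT, by simp, rfl⟩

lemma isChain_ne_of_mem_compose (hT : ∀ s ∈ T, s.IsChain (· ≠ ·))
    (hTs : ∀ i, ∀ s ∈ Ts i, s.IsChain (· ≠ ·)) {w : List (Σ i : Fin k, Fin (n i))}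
    (hw : w ∈ Compose T Ts) : w.IsChain (· ≠ ·) := by
  obtain ⟨c, hcT, hc, rfl⟩ := mem_compose_iff.1 hw
  exact isChain_ne_word (fun p hp => (hc p hp).2) (fun p hp => hTs p.1 _ (hc p hp).1)
    (hT _ hcT)

lemma tail_mem_compose (hT : ∀ s ∈ T, s.tail ∈ T) (hTs : ∀ i, ∀ s ∈ Ts i, s.tail ∈ Ts i)
    {w : List (Σ i : Fin k, Fin (n i))} (hw : w ∈ Compose T Ts) : w.tail ∈ Compose T Ts := by
  obtain ⟨_ | ⟨⟨i, s⟩, c⟩, hcT, hc, rfl⟩ := mem_compose_iff.1 hw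
  · exact hw
  obtain ⟨hs, hs_ne⟩ : s ∈ Ts i ∧ s ≠ [] := hc _ List.mem_cons_self
  have hc' : ∀ p ∈ c, p.2 ∈ Ts p.1 ∧ p.2 ≠ [] := fun p hp => hc p (List.mem_cons_of_mem _ hp)
  obtain ⟨a, t, rfl⟩ := List.exists_cons_of_ne_nil hs_ne
  rw [tail_word_cons]
  rcases eq_or_ne t [] with rfl | ht
  · exact mem_compose_iff.2 ⟨c, hT _ hcT, hc', rfl⟩
  · refine mem_compose_iff.2 ⟨⟨i, t⟩ :: c, hcT, ?_, rfl⟩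
    rintro p (_ | ⟨_, hp⟩)
    · exact ⟨hTs i _ hs, ht⟩
    · exact hc' p hp

end

/-- The composition of rooted subtrees is again a rooted subtree (in particular,
closed under taking final substrings, hence connected and containing the root). -/
theorem stmt2 {k : ℕ} {n : Fin k → ℕ} (T : Set (List (Fin k)))
    (Ts : ∀ i : Fin k, Set (List (Fin (n i))))
    (hT : IsRootedSubtree T) (hTs : ∀ i, IsRootedSubtree (Ts i)) :
    IsRootedSubtree (Compose T Ts) :=
  ⟨fun _ => isChain_ne_of_mem_compose hT.1 fun i => (hTs i).1,
    nil_mem_compose hT.2.1,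
    fun _ => tail_mem_compose hT.2.2 fun i => (hTs i).2.2⟩
end

section
/- Let T, T' ∈ Tree(k) and T_j, T_j' ∈ Tree(n_j) for j = 1,...,k, and let N = n_1 + ... + n_k. Then ρ_N(T(T_1,...,T_k), T'(T_1',...,T_k')) ≤ max(ρ_k(T,T'), ρ_{n_1}(T_1,T_1'), ..., ρ_{n_k}(T_k,T_k')). In other words, operad composition of rooted subtrees is 1-Lipschitz in each argument with respect to the ultrametrics ρ. -/
/-- `B_ℓ(S)`: the strings of `S` of length at most `ℓ`. -/
def ballSet {α : Type*} (ℓ : ℕ) (S : Set (List α)) : Set (List α) :=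
  {s ∈ S | s.length ≤ ℓ}

-- ρ(S,S') = exp(−sup{ℓ : B_ℓ(S) = B_ℓ(S')}), with value 0 when S = S'
open Classical in
noncomputable def rhoSet {α : Type*} (S S' : Set (List α)) : ℝ :=
  if S = S' then 0
  else Real.exp (-((sSup {ℓ : ℕ | ballSet ℓ S = ballSet ℓ S'} : ℕ) : ℝ))

/-!
Whether a string of length at most `ℓ` lies in `T(T₁,…,T_k)` depends only on `B_ℓ(T)` and the
`B_ℓ(T_j)`: such a string is cut into at most `ℓ` nonempty pieces, each of length at most `ℓ`.
Hence if the composites first differ at length `L + 1`, then `T, T'` or some `T_j, T_j'` already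
differ at length `L + 1`, and the corresponding distance is at least `exp (-L)`.
-/

section Ball

variable {α : Type*} {S S' : Set (List α)}

lemma ballSet_eq_of_le {ℓ m : ℕ} (h : ℓ ≤ m) (hm : ballSet m S = ballSet m S') :
    ballSet ℓ S = ballSet ℓ S' := by
  ext s
  have hs := congrArg (s ∈ ·) hm
  simp only [ballSet, Set.mem_ofPred_eq, eq_iff_iff] at hs ⊢
  constructor <;> intro hsl
  · exact ⟨(hs.mp ⟨hsl.1, hsl.2.trans h⟩).1, hsl.2⟩
  · exact ⟨(hs.mpr ⟨hsl.1, hsl.2.trans h⟩).1, hsl.2⟩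

lemma eq_of_forall_ballSet_eq (h : ∀ ℓ, ballSet ℓ S = ballSet ℓ S') : S = S' := by
  ext s
  have hs := congrArg (s ∈ ·) (h s.length)
  simpa [ballSet] using hs

lemma exp_neg_le_rhoSet {L : ℕ} (h : ballSet (L + 1) S ≠ ballSet (L + 1) S') :
    Real.exp (-(L : ℝ)) ≤ rhoSet S S' := by
  have hne : S ≠ S' := fun hSS' => h (by rw [hSS'])
  rw [rhoSet, if_neg hne, Real.exp_le_exp, neg_le_neg_iff, Nat.cast_le]
  exact csSup_le' fun m hm => by_contra fun hLm => h (ballSet_eq_of_le (by omega) hm)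

lemma rhoSet_le_of_forall {r : ℝ} (hr : 0 ≤ r)
    (h : ∀ L : ℕ, ballSet (L + 1) S ≠ ballSet (L + 1) S' → Real.exp (-(L : ℝ)) ≤ r) :
    rhoSet S S' ≤ r := by
  by_cases hSS' : S = S'
  · rwa [rhoSet, if_pos hSS']
  rw [rhoSet, if_neg hSS']
  set A := {ℓ : ℕ | ballSet ℓ S = ballSet ℓ S'}
  have hbdd : BddAbove A := by
    by_contra hA
    refine hSS' (eq_of_forall_ballSet_eq fun ℓ => ?_)
    obtain ⟨m, hm, hℓm⟩ := not_bddAbove_iff.mp hA ℓ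
    exact ballSet_eq_of_le hℓm.le hm
  refine h _ fun hsucc => ?_
  have := le_csSup hbdd hsucc
  omega

end Ball

section Compose

variable {k : ℕ} {n : Fin k → ℕ}

lemma length_foldr_append_map (c : List (Σ i : Fin k, List (Fin (n i)))) :
    (c.foldr (fun p acc =>
        p.2.map (fun x => (⟨p.1, x⟩ : Σ i : Fin k, Fin (n i))) ++ acc) []).length =
      (c.map fun p => p.2.length).sum := by
  induction c with
  | nil => rfl
  | cons p c ih => simp [Function.comp_def]

lemma ballSet_compose_subset {T T' : Set (List (Fin k))}
    {Ts Ts' : ∀ i : Fin k, Set (List (Fin (n i)))} {ℓ : ℕ}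
    (hT : ballSet ℓ T ⊆ ballSet ℓ T') (hTs : ∀ i, ballSet ℓ (Ts i) ⊆ ballSet ℓ (Ts' i)) :
    ballSet ℓ (Compose T Ts) ⊆ ballSet ℓ (Compose T' Ts') := by
  rintro w ⟨⟨c, hcT, hcTs, rfl⟩, hlen⟩
  rw [length_foldr_append_map] at hlen
  have hc_length : c.length ≤ ℓ := by
    have := List.length_le_sum_of_one_le (c.map fun p => p.2.length) <| by
      simp only [List.mem_map]
      rintro _ ⟨p, hp, rfl⟩
      exact List.length_pos_iff.mpr (hcTs p hp).2
    simpa using this.trans hlen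
  have hpiece_length : ∀ p ∈ c, p.2.length ≤ ℓ := fun p hp =>
    (List.single_le_sum (fun _ _ => Nat.zero_le _) _ (List.mem_map_of_mem hp)).trans hlen
  refine ⟨⟨c, (hT ⟨hcT, by simpa using hc_length⟩).1, fun p hp => ?_, rfl⟩, ?_⟩
  · exact ⟨(hTs p.1 ⟨(hcTs p hp).1, hpiece_length p hp⟩).1, (hcTs p hp).2⟩
  · rwa [length_foldr_append_map]

lemma ballSet_compose_eq {T T' : Set (List (Fin k))}
    {Ts Ts' : ∀ i : Fin k, Set (List (Fin (n i)))} {ℓ : ℕ}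
    (hT : ballSet ℓ T = ballSet ℓ T') (hTs : ∀ i, ballSet ℓ (Ts i) = ballSet ℓ (Ts' i)) :
    ballSet ℓ (Compose T Ts) = ballSet ℓ (Compose T' Ts') :=
  (ballSet_compose_subset hT.le fun i => (hTs i).le).antisymm
    (ballSet_compose_subset hT.ge fun i => (hTs i).ge)

end Compose

theorem stmt4_general {k : ℕ} {n : Fin k → ℕ}
    (T T' : Set (List (Fin k))) (Ts Ts' : ∀ i : Fin k, Set (List (Fin (n i)))) :
    rhoSet (Compose T Ts) (Compose T' Ts') ≤
      max (rhoSet T T') (⨆ i : Fin k, rhoSet (Ts i) (Ts' i)) := by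
  refine rhoSet_le_of_forall ?_ fun L hL => ?_
  · exact le_max_of_le_left (by unfold rhoSet; split_ifs <;> positivity)
  by_cases hT : ballSet (L + 1) T = ballSet (L + 1) T'
  · obtain ⟨i, hi⟩ : ∃ i, ballSet (L + 1) (Ts i) ≠ ballSet (L + 1) (Ts' i) := by
      by_contra! hTs
      exact hL (ballSet_compose_eq hT hTs)
    exact le_max_of_le_right <|
      (exp_neg_le_rhoSet hi).trans (le_ciSup (Finite.bddAbove_range fun j => rhoSet (Ts j) (Ts' j)) i)
  · exact le_max_of_le_left (exp_neg_le_rhoSet hT)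

/-- Operad composition of rooted subtrees is 1-Lipschitz in each argument:
`ρ(T(T₁,…,T_k), T'(T₁',…,T_k')) ≤ max(ρ(T,T'), max_j ρ(T_j,T_j'))`. -/
theorem stmt4 {k : ℕ} {n : Fin k → ℕ}
    (T T' : Set (List (Fin k))) (Ts Ts' : ∀ i : Fin k, Set (List (Fin (n i))))
    (hT : IsRootedSubtree T) (hT' : IsRootedSubtree T')
    (hTs : ∀ i, IsRootedSubtree (Ts i)) (hTs' : ∀ i, IsRootedSubtree (Ts' i)) :
    rhoSet (Compose T Ts) (Compose T' Ts') ≤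
      max (rhoSet T T') (⨆ i : Fin k, rhoSet (Ts i) (Ts' i)) :=
  stmt4_general T T' Ts Ts'
end

section
/- Let π be a non-crossing partition of [ℓ] and let S be the set of edges of graph(π) that do not touch the root vertex (equivalently, edges between nested blocks). Then there is a bijection between quotients τ of π and subsets A ⊆ S, under which I(τ) = I(π) − |A|, where I(·) denotes the number of inner blocks (blocks at depth ≥ 2 in the nesting tree). Consequently, for any integer n ≥ 1, the sum over all quotients τ of π of (n−1)^{I(τ)} equals n^{I(π)}. -/
/-- Partitions of finite subsets of `ℕ`, given by their set of blocks. -/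
abbrev Blocks : Type := Finset (Finset ℕ)

/-- `π` is a non-crossing partition (of its ground set `⋃ π`). -/
def IsNC (π : Blocks) : Prop :=
  (∀ B ∈ π, B.Nonempty) ∧
  (∀ B ∈ π, ∀ C ∈ π, B ≠ C → Disjoint B C) ∧
  (∀ B ∈ π, ∀ C ∈ π, B ≠ C →
    ¬ ∃ i₁ j₁ i₂ j₂ : ℕ, i₁ < j₁ ∧ j₁ < i₂ ∧ i₂ < j₂ ∧
      i₁ ∈ B ∧ i₂ ∈ B ∧ j₁ ∈ C ∧ j₂ ∈ C)

/-- `V` is nested inside `W`. -/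
def NestedIn (V W : Finset ℕ) : Prop :=
  ∃ j ∈ W, ∃ k ∈ W, ∀ x ∈ V, j < x ∧ x < k

/-- `V` is immediately nested inside `W` (an edge of the nesting tree of `π`
not touching the root). -/
def ImmNested (π : Blocks) (V W : Finset ℕ) : Prop :=
  NestedIn V W ∧ ¬ ∃ X ∈ π, NestedIn V X ∧ NestedIn X W

/-- Adjacency of blocks in the nesting tree (away from the root). -/
def AdjBlocks (π : Blocks) (V W : Finset ℕ) : Prop :=
  ImmNested π V W ∨ ImmNested π W V

/-- The edges of `graph(π)` not touching the root vertex. -/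
def nestEdges (π : Blocks) : Set (Finset ℕ × Finset ℕ) :=
  {p | p.1 ∈ π ∧ p.2 ∈ π ∧ ImmNested π p.1 p.2}

/-- The number of inner blocks of `π` (blocks of depth ≥ 2, i.e. nested in some block). -/
noncomputable def innerCount (π : Blocks) : ℕ :=
  {V : Finset ℕ | V ∈ π ∧ ∃ W ∈ π, NestedIn V W}.ncard

/-- `τ` is a quotient of `π`: a partition of the same ground set, each block of `π`
lies in a block of `τ`, and each block of `τ` is a union of blocks of `π` forming a
connected subgraph of `graph(π) ∖ {∅}`. -/
def IsQuotient (π τ : Blocks) : Prop :=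
  (∀ B ∈ τ, B.Nonempty) ∧
  (∀ B ∈ τ, ∀ C ∈ τ, B ≠ C → Disjoint B C) ∧
  τ.biUnion id = π.biUnion id ∧
  (∀ B ∈ π, ∃ C ∈ τ, B ⊆ C) ∧
  ∀ C ∈ τ, ∀ V ∈ π, ∀ W ∈ π, V ⊆ C → W ⊆ C →
    Relation.ReflTransGen
      (fun X Y => X ∈ π ∧ Y ∈ π ∧ X ⊆ C ∧ Y ⊆ C ∧ AdjBlocks π X Y) V W

/-
Every inner block `B` of a non-crossing partition `π` has a unique parent, the block immediately
enclosing it, so the non-root edges of `graph(π)` are exactly the pairs `(B, parent B)` and a set of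
such edges is a set `F` of inner blocks. Merging every `B ∈ F` into its parent produces the quotient
whose blocks are the fibres of `B ↦ top B`, the first block on the path from `B` to the root that is
not in `F`. Conversely a quotient `τ` is recovered from the set of inner blocks that lie in the same
block of `τ` as their parent. The inner blocks of the merged partition are the fibres of the inner
blocks outside `F`, hence `I(τ) = I(π) - |F|`, and the sum is `(1 + (n - 1)) ^ I(π)` by the binomial
theorem.
-/

open scoped Classical

theorem NestedIn.trans {U V W : Finset ℕ} (h₁ : NestedIn U V) (h₂ : NestedIn V W) :
    NestedIn U W := by
  obtain ⟨j, hj, k, hk, h₁⟩ := h₁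
  obtain ⟨j', hj', k', hk', h₂⟩ := h₂
  exact ⟨j', hj', k', hk', fun x hx =>
    ⟨(h₂ j hj).1.trans (h₁ x hx).1, (h₁ x hx).2.trans (h₂ k hk).2⟩⟩

theorem NestedIn.irrefl (V : Finset ℕ) : ¬ NestedIn V V := by
  rintro ⟨j, hj, _, _, h⟩
  exact lt_irrefl j (h j hj).1

theorem NestedIn.asymm {V W : Finset ℕ} (h : NestedIn V W) : ¬ NestedIn W V :=
  fun h' => NestedIn.irrefl V (h.trans h')

theorem NestedIn.mono_left {U V W : Finset ℕ} (hUV : U ⊆ V) (h : NestedIn V W) :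
    NestedIn U W := by
  obtain ⟨j, hj, k, hk, h⟩ := h
  exact ⟨j, hj, k, hk, fun x hx => h x (hUV hx)⟩

theorem NestedIn.mono_right {U W W' : Finset ℕ} (h : NestedIn U W) (hWW' : W ⊆ W') :
    NestedIn U W' := by
  obtain ⟨j, hj, k, hk, h⟩ := h
  exact ⟨j, hWW' hj, k, hWW' hk, h⟩

theorem Blocks.eq_of_mem_of_mem {τ : Blocks} (hτ : ∀ B ∈ τ, ∀ C ∈ τ, B ≠ C → Disjoint B C)
    {B C : Finset ℕ} (hB : B ∈ τ) (hC : C ∈ τ) {x : ℕ} (hxB : x ∈ B) (hxC : x ∈ C) : B = C :=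
  by_contra fun hne => Finset.disjoint_left.1 (hτ B hB C hC hne) hxB hxC

namespace IsNC

variable {π : Blocks}

theorem nestedIn_of_min_lt (hnc : IsNC π) {C D : Finset ℕ} (hC : C ∈ π) (hD : D ∈ π)
    (hne : C ≠ D) (hCne : C.Nonempty) (hmin : ∀ y ∈ D, C.min' hCne < y) {d c : ℕ}
    (hd : d ∈ D) (hc : c ∈ C) (hdc : d < c) : NestedIn D C := by
  refine ⟨_, C.min'_mem hCne, _, C.max'_mem hCne, fun y hy => ⟨hmin y hy, ?_⟩⟩
  -- an element `y` of `D` beyond `max C` would cross `C`: `min C < d < c < y`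
  by_contra! hle
  have hlt : C.max' hCne < y := hle.lt_of_ne fun h =>
    Finset.disjoint_left.1 (hnc.2.1 C hC D hD hne) (C.max'_mem hCne) (h ▸ hy)
  exact hnc.2.2 C hC D hD hne ⟨_, d, c, y, hmin d hd, hdc, (C.le_max' c hc).trans_lt hlt,
    C.min'_mem hCne, hc, hd, hy⟩

theorem nestedIn_or_nestedIn (hnc : IsNC π) {B C D : Finset ℕ} (hC : C ∈ π) (hD : D ∈ π)
    (hne : C ≠ D) (hB : B.Nonempty) (hBC : NestedIn B C) (hBD : NestedIn B D) :
    NestedIn C D ∨ NestedIn D C := by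
  obtain ⟨x, hx⟩ := hB
  obtain ⟨j, hj, k, hk, hjk⟩ := hBC
  obtain ⟨j', hj', k', hk', hjk'⟩ := hBD
  have hCne : C.Nonempty := ⟨j, hj⟩
  have hDne : D.Nonempty := ⟨j', hj'⟩
  rcases lt_trichotomy (C.min' hCne) (D.min' hDne) with h | h | h
  · exact Or.inr <| hnc.nestedIn_of_min_lt hC hD hne hCne
      (fun y hy => h.trans_le (D.min'_le y hy)) hj' hk ((hjk' x hx).1.trans (hjk x hx).2)
  · exact absurd (h ▸ D.min'_mem hDne)
      (Finset.disjoint_left.1 (hnc.2.1 C hC D hD hne) (C.min'_mem hCne))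
  · exact Or.inl <| hnc.nestedIn_of_min_lt hD hC hne.symm hDne
      (fun y hy => h.trans_le (C.min'_le y hy)) hj hk' ((hjk x hx).1.trans (hjk' x hx).2)

end IsNC

namespace IsQuotient

variable {π τ : Blocks} {C : Finset ℕ}

theorem exists_mem_subset (hτ : IsQuotient π τ) (hC : C ∈ τ) {x : ℕ} (hx : x ∈ C) :
    ∃ X ∈ π, x ∈ X ∧ X ⊆ C := by
  have hx' : x ∈ π.biUnion id := hτ.2.2.1 ▸ Finset.mem_biUnion.2 ⟨C, hC, hx⟩
  obtain ⟨X, hX, hxX⟩ := Finset.mem_biUnion.1 hx'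
  obtain ⟨C', hC', hXC'⟩ := hτ.2.2.2.1 X hX
  exact ⟨X, hX, hxX, Blocks.eq_of_mem_of_mem hτ.2.1 hC' hC (hXC' hxX) hx ▸ hXC'⟩

theorem eq_of_subset_of_subset (hτ : IsQuotient π τ) {C' X : Finset ℕ} (hC : C ∈ τ)
    (hC' : C' ∈ τ) (hX : X.Nonempty) (h : X ⊆ C) (h' : X ⊆ C') : C = C' :=
  Blocks.eq_of_mem_of_mem hτ.2.1 hC hC' (h hX.choose_spec) (h' hX.choose_spec)

theorem subset_powerset (hτ : IsQuotient π τ) : τ ⊆ (π.biUnion id).powerset :=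
  fun _ hC => Finset.mem_powerset.2 (hτ.2.2.1 ▸ Finset.subset_biUnion_of_mem id hC)

end IsQuotient

noncomputable section

namespace Blocks

variable {π τ : Blocks} {F : Finset (Finset ℕ)} {B C X : Finset ℕ}

section Parent

variable (π) in
def innerBlocks : Finset (Finset ℕ) := π.filter fun V => ∃ W ∈ π, NestedIn V W

theorem innerCount_eq_card_innerBlocks (π : Blocks) :
    innerCount π = (innerBlocks π).card := by
  rw [innerCount, ← Set.ncard_coe_finset]
  congr 1
  ext V
  simp [innerBlocks]

theorem innerBlocks_subset : innerBlocks π ⊆ π := Finset.filter_subset _ _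

variable (π) in
def depth (B : Finset ℕ) : ℕ := (π.filter (NestedIn B)).card

theorem depth_lt_depth {P : Finset ℕ} (hP : P ∈ π) (h : NestedIn B P) :
    depth π P < depth π B := by
  refine Finset.card_lt_card ⟨fun W hW => ?_, fun hsub => ?_⟩
  · obtain ⟨hW, hPW⟩ := Finset.mem_filter.1 hW
    exact Finset.mem_filter.2 ⟨hW, h.trans hPW⟩
  · exact NestedIn.irrefl P (Finset.mem_filter.1 (hsub (Finset.mem_filter.2 ⟨hP, h⟩))).2

/-- The deepest block enclosing `B`; junk value `∅` if there is none. -/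
def parent (π : Blocks) (B : Finset ℕ) : Finset ℕ :=
  if h : (π.filter (NestedIn B)).Nonempty then
    (Finset.exists_max_image _ (depth π) h).choose
  else ∅

theorem parent_mem_and_immNested (hB : B ∈ innerBlocks π) :
    parent π B ∈ π ∧ ImmNested π B (parent π B) := by
  obtain ⟨-, W, hW, hBW⟩ := Finset.mem_filter.1 hB
  have hne : (π.filter (NestedIn B)).Nonempty := ⟨W, Finset.mem_filter.2 ⟨hW, hBW⟩⟩
  obtain ⟨hmem, hmax⟩ := (Finset.exists_max_image _ (depth π) hne).choose_spec
  rw [parent, dif_pos hne]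
  obtain ⟨hP, hBP⟩ := Finset.mem_filter.1 hmem
  refine ⟨hP, hBP, fun ⟨X, hX, hBX, hXP⟩ => ?_⟩
  exact (depth_lt_depth hP hXP).not_ge (hmax X (Finset.mem_filter.2 ⟨hX, hBX⟩))

theorem parent_mem (hB : B ∈ innerBlocks π) : parent π B ∈ π :=
  (parent_mem_and_immNested hB).1

theorem immNested_parent (hB : B ∈ innerBlocks π) : ImmNested π B (parent π B) :=
  (parent_mem_and_immNested hB).2

theorem nestedIn_parent (hB : B ∈ innerBlocks π) : NestedIn B (parent π B) :=
  (immNested_parent hB).1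

theorem depth_parent_lt (hB : B ∈ innerBlocks π) : depth π (parent π B) < depth π B :=
  depth_lt_depth (parent_mem hB) (nestedIn_parent hB)

theorem eq_parent_of_immNested (hnc : IsNC π) {P : Finset ℕ} (hB : B ∈ π) (hP : P ∈ π)
    (h : ImmNested π B P) : P = parent π B := by
  have hBi : B ∈ innerBlocks π := Finset.mem_filter.2 ⟨hB, P, hP, h.1⟩
  by_contra hne
  rcases hnc.nestedIn_or_nestedIn hP (parent_mem hBi) hne (hnc.1 B hB) h.1
      (nestedIn_parent hBi) with hc | hc
  · exact (immNested_parent hBi).2 ⟨P, hP, h.1, hc⟩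
  · exact h.2 ⟨parent π B, parent_mem hBi, nestedIn_parent hBi, hc⟩

theorem mem_nestEdges_iff (hnc : IsNC π) {V W : Finset ℕ} :
    (V, W) ∈ nestEdges π ↔ V ∈ innerBlocks π ∧ W = parent π V := by
  constructor
  · rintro ⟨hV, hW, h⟩
    exact ⟨Finset.mem_filter.2 ⟨hV, W, hW, h.1⟩, eq_parent_of_immNested hnc hV hW h⟩
  · rintro ⟨hV, rfl⟩
    exact ⟨innerBlocks_subset hV, parent_mem hV, immNested_parent hV⟩

end Parent

section Top

def top (π : Blocks) (F : Finset (Finset ℕ)) (B : Finset ℕ) : Finset ℕ :=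
  if h : B ∈ F ∧ B ∈ innerBlocks π then
    have := depth_parent_lt h.2
    top π F (parent π B)
  else B
termination_by depth π B

theorem top_of_not_mem (h : B ∉ F) : top π F B = B := by
  rw [top, dif_neg fun h' => h h'.1]

theorem top_of_mem (hF : F ⊆ innerBlocks π) (h : B ∈ F) : top π F B = top π F (parent π B) := by
  rw [top, dif_pos ⟨h, hF h⟩]

theorem induction_on_parent (hF : F ⊆ innerBlocks π) {P : ∀ B, B ∈ π → Prop}
    (not_mem : ∀ B (hB : B ∈ π), B ∉ F → P B hB)
    (mem : ∀ B (hBF : B ∈ F), P (parent π B) (parent_mem (hF hBF)) →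
      P B (innerBlocks_subset (hF hBF)))
    (B : Finset ℕ) (hB : B ∈ π) : P B hB :=
  if hBF : B ∈ F then
    mem B hBF (induction_on_parent hF not_mem mem _ (parent_mem (hF hBF)))
  else not_mem B hB hBF
termination_by depth π B
decreasing_by exact depth_parent_lt (hF hBF)

variable (hF : F ⊆ innerBlocks π)
include hF

theorem top_mem_sdiff (hB : B ∈ π) : top π F B ∈ π \ F := by
  induction B, hB using induction_on_parent hF with
  | not_mem B hB hBF => rw [top_of_not_mem hBF]; exact Finset.mem_sdiff.2 ⟨hB, hBF⟩
  | mem B hBF ih => rwa [top_of_mem hF hBF]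

theorem top_eq_or_nestedIn (hB : B ∈ π) : top π F B = B ∨ NestedIn B (top π F B) := by
  induction B, hB using induction_on_parent hF with
  | not_mem B _ hBF => exact Or.inl (top_of_not_mem hBF)
  | mem B hBF ih =>
    have hBP := nestedIn_parent (hF hBF)
    rw [top_of_mem hF hBF]
    rcases ih with h | h
    · rw [h]
      exact Or.inr hBP
    · exact Or.inr (hBP.trans h)

end Top

section Merge

def fiber (π : Blocks) (F : Finset (Finset ℕ)) (B : Finset ℕ) : Finset ℕ :=
  (π.filter fun X => top π F X = B).biUnion id

def merge (π : Blocks) (F : Finset (Finset ℕ)) : Blocks := (π \ F).image (fiber π F)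

theorem mem_fiber {x : ℕ} : x ∈ fiber π F B ↔ ∃ X ∈ π, top π F X = B ∧ x ∈ X := by
  simp only [fiber, Finset.mem_biUnion, Finset.mem_filter, id_eq, and_assoc]

theorem subset_fiber_top (hX : X ∈ π) : X ⊆ fiber π F (top π F X) :=
  fun _ hx => mem_fiber.2 ⟨X, hX, rfl, hx⟩

theorem subset_fiber_self (hB : B ∈ π \ F) : B ⊆ fiber π F B := by
  obtain ⟨hB, hBF⟩ := Finset.mem_sdiff.1 hB
  simpa only [top_of_not_mem hBF] using subset_fiber_top (F := F) hB

theorem subset_fiber_iff (hnc : IsNC π) (hX : X ∈ π) : X ⊆ fiber π F B ↔ top π F X = B := by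
  refine ⟨fun h => ?_, fun h => h ▸ subset_fiber_top hX⟩
  obtain ⟨x, hx⟩ := hnc.1 X hX
  obtain ⟨X', hX', rfl, hx'⟩ := mem_fiber.1 (h hx)
  rw [eq_of_mem_of_mem hnc.2.1 hX hX' hx hx']

theorem disjoint_fiber (hnc : IsNC π) {B' : Finset ℕ} (h : B ≠ B') :
    Disjoint (fiber π F B) (fiber π F B') := by
  refine Finset.disjoint_left.2 fun x hx hx' => h ?_
  obtain ⟨X, hX, rfl, hxX⟩ := mem_fiber.1 hx
  obtain ⟨X', hX', rfl, hxX'⟩ := mem_fiber.1 hx'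
  rw [eq_of_mem_of_mem hnc.2.1 hX hX' hxX hxX']

theorem fiber_injOn (hnc : IsNC π) : Set.InjOn (fiber π F) ↑(π \ F) := by
  intro B hB B' hB' h
  have hB₀ := Finset.mem_coe.1 hB
  rw [← top_of_not_mem (Finset.mem_sdiff.1 hB₀).2,
    ← subset_fiber_iff hnc (Finset.mem_sdiff.1 hB₀).1, ← h]
  exact subset_fiber_self hB₀

theorem fiber_mem_merge (hB : B ∈ π \ F) : fiber π F B ∈ merge π F :=
  Finset.mem_image_of_mem _ hB

variable (hF : F ⊆ innerBlocks π)
include hF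

theorem fiber_top_mem_merge (hX : X ∈ π) : fiber π F (top π F X) ∈ merge π F :=
  fiber_mem_merge (top_mem_sdiff hF hX)

theorem exists_le_and_exists_ge_of_mem_fiber {x : ℕ} (hx : x ∈ fiber π F B) :
    (∃ b ∈ B, b ≤ x) ∧ ∃ b ∈ B, x ≤ b := by
  obtain ⟨X, hX, rfl, hxX⟩ := mem_fiber.1 hx
  rcases top_eq_or_nestedIn hF hX with h | ⟨j, hj, k, hk, hjk⟩
  · rw [h]
    exact ⟨⟨x, hxX, le_rfl⟩, ⟨x, hxX, le_rfl⟩⟩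
  · exact ⟨⟨j, hj, (hjk x hxX).1.le⟩, ⟨k, hk, (hjk x hxX).2.le⟩⟩

theorem nestedIn_fiber_of_nestedIn {W : Finset ℕ} (h : NestedIn B W) :
    NestedIn (fiber π F B) W := by
  obtain ⟨j, hj, k, hk, hjk⟩ := h
  refine ⟨j, hj, k, hk, fun x hx => ?_⟩
  obtain ⟨⟨b, hb, hbx⟩, ⟨b', hb', hxb'⟩⟩ := exists_le_and_exists_ge_of_mem_fiber hF hx
  exact ⟨(hjk b hb).1.trans_le hbx, hxb'.trans_lt (hjk b' hb').2⟩

theorem nestedIn_of_nestedIn_fiber {U : Finset ℕ} (h : NestedIn U (fiber π F B)) :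
    NestedIn U B := by
  obtain ⟨j, hj, k, hk, hjk⟩ := h
  obtain ⟨⟨b, hb, hbj⟩, -⟩ := exists_le_and_exists_ge_of_mem_fiber hF hj
  obtain ⟨-, ⟨b', hb', hkb'⟩⟩ := exists_le_and_exists_ge_of_mem_fiber hF hk
  exact ⟨b, hb, b', hb', fun x hx => ⟨hbj.trans_lt (hjk x hx).1, (hjk x hx).2.trans_le hkb'⟩⟩

theorem innerBlocks_merge :
    innerBlocks (merge π F) = (innerBlocks π \ F).image (fiber π F) := by
  ext C
  simp only [innerBlocks, Finset.mem_filter, Finset.mem_image, Finset.mem_sdiff]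
  constructor
  · rintro ⟨hC, W, hW, hCW⟩
    obtain ⟨B, hB, rfl⟩ := Finset.mem_image.1 hC
    obtain ⟨B', hB', rfl⟩ := Finset.mem_image.1 hW
    obtain ⟨hBπ, hBF⟩ := Finset.mem_sdiff.1 hB
    exact ⟨B, ⟨⟨hBπ, B', (Finset.mem_sdiff.1 hB').1,
      nestedIn_of_nestedIn_fiber hF (hCW.mono_left (subset_fiber_self hB))⟩, hBF⟩, rfl⟩
  · rintro ⟨B, ⟨⟨hB, W, hW, hBW⟩, hBF⟩, rfl⟩
    exact ⟨fiber_mem_merge (Finset.mem_sdiff.2 ⟨hB, hBF⟩), _, fiber_top_mem_merge hF hW,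
      (nestedIn_fiber_of_nestedIn hF hBW).mono_right (subset_fiber_top hW)⟩

end Merge

section IsQuotient

def AdjWithin (π : Blocks) (C X Y : Finset ℕ) : Prop :=
  X ∈ π ∧ Y ∈ π ∧ X ⊆ C ∧ Y ⊆ C ∧ AdjBlocks π X Y

instance : Std.Symm (AdjWithin π C) where
  symm _ _ := fun ⟨hX, hY, hXC, hYC, h⟩ => ⟨hY, hX, hYC, hXC, h.symm⟩

theorem reflTransGen_adjWithin_top (hF : F ⊆ innerBlocks π) (hX : X ∈ π) :
    Relation.ReflTransGen (AdjWithin π (fiber π F (top π F X))) X (top π F X) := by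
  induction X, hX using induction_on_parent hF with
  | not_mem X _ hXF => rw [top_of_not_mem hXF]
  | mem X hXF ih =>
    have hX := hF hXF
    rw [top_of_mem hF hXF]
    refine .head ⟨innerBlocks_subset hX, parent_mem hX, ?_, subset_fiber_top (parent_mem hX),
      .inl (immNested_parent hX)⟩ ih
    rw [← top_of_mem hF hXF]
    exact subset_fiber_top (innerBlocks_subset hX)

variable (hnc : IsNC π) (hF : F ⊆ innerBlocks π)
include hnc hF

theorem isQuotient_merge : IsQuotient π (merge π F) := by
  refine ⟨?_, ?_, ?_, fun B hB => ⟨_, fiber_top_mem_merge hF hB, subset_fiber_top hB⟩, ?_⟩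
  · rintro _ hC
    obtain ⟨B, hB, rfl⟩ := Finset.mem_image.1 hC
    exact (hnc.1 B (Finset.mem_sdiff.1 hB).1).mono (subset_fiber_self hB)
  · rintro _ hC _ hC' hne
    obtain ⟨B, -, rfl⟩ := Finset.mem_image.1 hC
    obtain ⟨B', -, rfl⟩ := Finset.mem_image.1 hC'
    exact disjoint_fiber hnc fun h => hne (h ▸ rfl)
  · ext x
    simp only [Finset.mem_biUnion, id_eq]
    constructor
    · rintro ⟨_, hC, hx⟩
      obtain ⟨B, -, rfl⟩ := Finset.mem_image.1 hC
      obtain ⟨X, hX, -, hxX⟩ := mem_fiber.1 hx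
      exact ⟨X, hX, hxX⟩
    · rintro ⟨X, hX, hxX⟩
      exact ⟨_, fiber_top_mem_merge hF hX, subset_fiber_top hX hxX⟩
  · rintro _ hC V hV W hW hVC hWC
    obtain ⟨B, -, rfl⟩ := Finset.mem_image.1 hC
    rw [subset_fiber_iff hnc hV] at hVC
    rw [subset_fiber_iff hnc hW] at hWC
    have hV' := reflTransGen_adjWithin_top hF hV
    have hW' := reflTransGen_adjWithin_top hF hW
    rw [hVC] at hV'
    rw [hWC] at hW'
    exact hV'.trans (symm_of _ hW')

theorem innerCount_merge : innerCount (merge π F) + F.card = innerCount π := by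
  have hinj : Set.InjOn (fiber π F) ↑(innerBlocks π \ F) :=
    (fiber_injOn hnc).mono (Finset.coe_subset.2 (Finset.sdiff_subset_sdiff innerBlocks_subset
      le_rfl))
  rw [innerCount_eq_card_innerBlocks, innerCount_eq_card_innerBlocks, innerBlocks_merge hF,
    Finset.card_image_of_injOn hinj, Finset.card_sdiff_of_subset hF,
    Nat.sub_add_cancel (Finset.card_le_card hF)]

end IsQuotient

section Inverse

def mergedBlocks (π τ : Blocks) : Finset (Finset ℕ) :=
  (innerBlocks π).filter fun B => ∃ C ∈ τ, B ⊆ C ∧ parent π B ⊆ C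

theorem mergedBlocks_subset : mergedBlocks π τ ⊆ innerBlocks π := Finset.filter_subset _ _

theorem mergedBlocks_merge (hnc : IsNC π) (hF : F ⊆ innerBlocks π) :
    mergedBlocks π (merge π F) = F := by
  ext B
  simp only [mergedBlocks, Finset.mem_filter]
  constructor
  · rintro ⟨hB, _, hC, hBC, hPC⟩
    obtain ⟨B₀, -, rfl⟩ := Finset.mem_image.1 hC
    rw [subset_fiber_iff hnc (innerBlocks_subset hB)] at hBC
    rw [subset_fiber_iff hnc (parent_mem hB)] at hPC
    -- otherwise `B` is its own top, while the top of its parent is the parent or encloses it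
    by_contra hBF
    rw [top_of_not_mem hBF] at hBC
    subst hBC
    have hBP := nestedIn_parent hB
    rcases top_eq_or_nestedIn hF (parent_mem hB) with h | h
    · rw [← h, hPC] at hBP
      exact NestedIn.irrefl B hBP
    · rw [hPC] at h
      exact hBP.asymm h
  · intro hBF
    have hB := hF hBF
    refine ⟨hB, _, fiber_top_mem_merge hF (innerBlocks_subset hB),
      subset_fiber_top (innerBlocks_subset hB), ?_⟩
    rw [top_of_mem hF hBF]
    exact subset_fiber_top (parent_mem hB)

theorem top_eq_top_of_immNested (hnc : IsNC π) (hC : C ∈ τ) {Y : Finset ℕ} (hX : X ∈ π) (hY : Y ∈ π)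
    (hXC : X ⊆ C) (hYC : Y ⊆ C) (h : ImmNested π X Y) :
    top π (mergedBlocks π τ) X = top π (mergedBlocks π τ) Y := by
  have hYP := eq_parent_of_immNested hnc hX hY h
  have hXG : X ∈ mergedBlocks π τ :=
    Finset.mem_filter.2 ⟨Finset.mem_filter.2 ⟨hX, Y, hY, h.1⟩, C, hC, hXC, hYP ▸ hYC⟩
  rw [top_of_mem mergedBlocks_subset hXG, ← hYP]

variable (hnc : IsNC π) (hτ : IsQuotient π τ)
include hnc hτ

theorem parent_subset_iff (hX : X ∈ mergedBlocks π τ) (hC : C ∈ τ) :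
    parent π X ⊆ C ↔ X ⊆ C := by
  obtain ⟨hXi, C', hC', hXC', hPC'⟩ := Finset.mem_filter.1 hX
  constructor
  · intro h
    rwa [hτ.eq_of_subset_of_subset hC hC' (hnc.1 _ (parent_mem hXi)) h hPC']
  · intro h
    rwa [hτ.eq_of_subset_of_subset hC hC' (hnc.1 X (innerBlocks_subset hXi)) h hXC']

theorem top_subset_iff (hX : X ∈ π) (hC : C ∈ τ) :
    top π (mergedBlocks π τ) X ⊆ C ↔ X ⊆ C := by
  induction X, hX using induction_on_parent (mergedBlocks_subset (τ := τ)) with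
  | not_mem X _ hXG => rw [top_of_not_mem hXG]
  | mem X hXG ih => rw [top_of_mem mergedBlocks_subset hXG, ih, parent_subset_iff hnc hτ hXG hC]

theorem top_eq_top (hC : C ∈ τ) {V W : Finset ℕ} (hV : V ∈ π) (hW : W ∈ π) (hVC : V ⊆ C)
    (hWC : W ⊆ C) : top π (mergedBlocks π τ) V = top π (mergedBlocks π τ) W := by
  induction hτ.2.2.2.2 C hC V hV W hW hVC hWC with
  | refl => rfl
  | tail _ hXY ih =>
    obtain ⟨hX, hY, hXC, hYC, h | h⟩ := hXY
    · rw [ih hX hXC, top_eq_top_of_immNested hnc hC hX hY hXC hYC h]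
    · rw [ih hX hXC, top_eq_top_of_immNested hnc hC hY hX hYC hXC h]

theorem eq_fiber_top (hC : C ∈ τ) (hX : X ∈ π) (hXC : X ⊆ C) :
    C = fiber π (mergedBlocks π τ) (top π (mergedBlocks π τ) X) := by
  ext y
  constructor
  · intro hy
    obtain ⟨Y, hY, hyY, hYC⟩ := hτ.exists_mem_subset hC hy
    exact mem_fiber.2 ⟨Y, hY, top_eq_top hnc hτ hC hY hX hYC hXC, hyY⟩
  · intro hy
    obtain ⟨Y, hY, hYX, hyY⟩ := mem_fiber.1 hy
    exact (top_subset_iff hnc hτ hY hC).1 (hYX ▸ (top_subset_iff hnc hτ hX hC).2 hXC) hyY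

theorem merge_mergedBlocks : merge π (mergedBlocks π τ) = τ := by
  ext C
  constructor
  · intro hC
    obtain ⟨B, hB, rfl⟩ := Finset.mem_image.1 hC
    obtain ⟨hBπ, hBG⟩ := Finset.mem_sdiff.1 hB
    obtain ⟨C', hC', hBC'⟩ := hτ.2.2.2.1 B hBπ
    rwa [eq_fiber_top hnc hτ hC' hBπ hBC', top_of_not_mem hBG] at hC'
  · intro hC
    obtain ⟨x, hx⟩ := hτ.1 C hC
    obtain ⟨X, hX, -, hXC⟩ := hτ.exists_mem_subset hC hx
    rw [eq_fiber_top hnc hτ hC hX hXC]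
    exact fiber_top_mem_merge mergedBlocks_subset hX

end Inverse

section Bijection

def edgeSubsetEquiv (hnc : IsNC π) :
    {A : Set (Finset ℕ × Finset ℕ) // A ⊆ nestEdges π} ≃
      {F : Finset (Finset ℕ) // F ⊆ innerBlocks π} where
  toFun A := ⟨(innerBlocks π).filter fun B => (B, parent π B) ∈ A.1, Finset.filter_subset _ _⟩
  invFun F := ⟨(fun B => (B, parent π B)) '' F.1, by
    rintro _ ⟨B, hB, rfl⟩
    exact (mem_nestEdges_iff hnc).2 ⟨F.2 hB, rfl⟩⟩
  left_inv A := by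
    ext ⟨V, W⟩
    simp only [Finset.coe_filter, Set.mem_image, Prod.mk.injEq]
    constructor
    · rintro ⟨B, ⟨-, hB⟩, rfl, rfl⟩
      exact hB
    · intro h
      obtain ⟨hV, rfl⟩ := (mem_nestEdges_iff hnc).1 (A.2 h)
      exact ⟨V, ⟨hV, h⟩, rfl, rfl⟩
  right_inv F := by
    ext B
    simp only [Finset.mem_filter, Set.mem_image, Finset.mem_coe, Prod.mk.injEq]
    constructor
    · rintro ⟨-, B', hB', rfl, -⟩
      exact hB'
    · intro hB
      exact ⟨F.2 hB, B, hB, rfl, rfl⟩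

theorem ncard_eq_card_edgeSubsetEquiv (hnc : IsNC π)
    (A : {A : Set (Finset ℕ × Finset ℕ) // A ⊆ nestEdges π}) :
    A.1.ncard = (edgeSubsetEquiv hnc A).1.card := by
  obtain ⟨F, rfl⟩ := (edgeSubsetEquiv hnc).symm.surjective A
  rw [Equiv.apply_symm_apply]
  exact (Set.ncard_image_of_injective _ fun _ _ h => congrArg Prod.fst h).trans
    (Set.ncard_coe_finset _)

def quotientEquiv (hnc : IsNC π) :
    {F : Finset (Finset ℕ) // F ⊆ innerBlocks π} ≃ {τ : Blocks // IsQuotient π τ} where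
  toFun F := ⟨merge π F, isQuotient_merge hnc F.2⟩
  invFun τ := ⟨mergedBlocks π τ, mergedBlocks_subset⟩
  left_inv F := Subtype.ext (mergedBlocks_merge hnc F.2)
  right_inv τ := Subtype.ext (merge_mergedBlocks hnc τ.2)

theorem sum_filter_isQuotient (hnc : IsNC π) {M : Type*} [AddCommMonoid M] (g : Blocks → M) :
    ∑ τ ∈ ((π.biUnion id).powerset.powerset).filter (fun τ => IsQuotient π τ), g τ =
      ∑ F ∈ (innerBlocks π).powerset, g (merge π F) := by
  refine Finset.sum_nbij' (mergedBlocks π) (merge π)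
    (fun _ _ => Finset.mem_powerset.2 mergedBlocks_subset) (fun F hF => ?_)
    (fun _ hτ => merge_mergedBlocks hnc (Finset.mem_filter.1 hτ).2)
    (fun _ hF => mergedBlocks_merge hnc (Finset.mem_powerset.1 hF))
    (fun _ hτ => by rw [merge_mergedBlocks hnc (Finset.mem_filter.1 hτ).2])
  have hq := isQuotient_merge hnc (Finset.mem_powerset.1 hF)
  exact Finset.mem_filter.2 ⟨Finset.mem_powerset.2 hq.subset_powerset, hq⟩

end Bijection

end Blocks

end

open Classical in
theorem stmt7 (π : Blocks) (hnc : IsNC π) :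
    (∃ Φ : {A : Set (Finset ℕ × Finset ℕ) // A ⊆ nestEdges π} ≃ {τ : Blocks // IsQuotient π τ},
        ∀ A, innerCount (Φ A).1 + A.1.ncard = innerCount π) ∧
    (∀ n : ℕ, 1 ≤ n →
      ∑ τ ∈ ((π.biUnion id).powerset.powerset).filter (fun τ => IsQuotient π τ),
        (n - 1) ^ innerCount τ = n ^ innerCount π) := by
  refine ⟨⟨(Blocks.edgeSubsetEquiv hnc).trans (Blocks.quotientEquiv hnc), fun A => ?_⟩,
    fun n hn => ?_⟩
  · rw [Blocks.ncard_eq_card_edgeSubsetEquiv hnc A]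
    exact Blocks.innerCount_merge hnc (Blocks.edgeSubsetEquiv hnc A).2
  · rw [Blocks.sum_filter_isQuotient hnc, Blocks.innerCount_eq_card_innerBlocks]
    calc ∑ F ∈ (Blocks.innerBlocks π).powerset, (n - 1) ^ innerCount (Blocks.merge π F)
        = ∑ F ∈ (Blocks.innerBlocks π).powerset,
            1 ^ F.card * (n - 1) ^ ((Blocks.innerBlocks π).card - F.card) := by
          refine Finset.sum_congr rfl fun F hF => ?_
          rw [one_pow, one_mul, ← Blocks.innerCount_eq_card_innerBlocks,
            ← Blocks.innerCount_merge hnc (Finset.mem_powerset.1 hF), Nat.add_sub_cancel]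
      _ = n ^ (Blocks.innerBlocks π).card := by
          rw [Finset.sum_pow_mul_eq_add_pow, Nat.add_sub_cancel' hn]
end

section
/- Let π be a non-crossing partition of a totally ordered set S obtained by concatenation: S is partitioned into consecutive intervals {V : V block of an interval partition σ}, and π = ⊔_{V ∈ σ} τ_V with τ_V a non-crossing partition of V. Then for any rooted subtree T with n = |[N] ∩ T| ≥ 2, the coefficients are multiplicative: α_{T,π} = Π_{V ∈ σ} α_{T, τ_V}. -/
/-- The alternating reduction of a string: replace each maximal run of
consecutive equal letters by a single occurrence of that letter. -/
def red {α : Type*} [DecidableEq α] : List α → List α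
  | [] => []
  | [a] => [a]
  | a :: b :: t => if a = b then red (b :: t) else a :: red (b :: t)

/-- `V` and `W` lie in the same `χ`-component of `π`: they are joined by a path
in `graph(π) ∖ {∅}` all of whose edges join blocks of the same color. -/
def sameComp {N : ℕ} (π : Blocks) (χ : Finset ℕ → Fin N) (V W : Finset ℕ) : Prop :=
  Relation.ReflTransGen
    (fun X Y => X ∈ π ∧ Y ∈ π ∧ AdjBlocks π X Y ∧ χ X = χ Y) V W

open Classical in
noncomputable def component {N : ℕ} (π : Blocks) (χ : Finset ℕ → Fin N)
    (V : Finset ℕ) : Finset (Finset ℕ) :=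
  π.filter (fun W => sameComp π χ V W)

-- The `χ`-components of `π`.
open Classical in
noncomputable def components {N : ℕ} (π : Blocks) (χ : Finset ℕ → Fin N) :
    Finset Blocks :=
  π.image (fun V => component π χ V)

/-- `L` is the chain of `V` in `π`: the list `(V, V₁, …, V_d)` consisting of `V`
followed by all blocks surrounding `V`, each nested in the next. -/
def IsChainList (π : Blocks) (V : Finset ℕ) (L : List (Finset ℕ)) : Prop :=
  L.head? = some V ∧ (∀ W, W ∈ L.tail ↔ W ∈ π ∧ NestedIn V W) ∧
  L.Chain' (fun X Y => NestedIn X Y) ∧ L.Nodup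

/-- `χ ∈ X_w(π,T)`: for every block `V`, the alternating reduction of the color
string along the chain of `V` lies in `T`. -/
def WeaklyCompatible {N : ℕ} (T : Set (List (Fin N))) (π : Blocks)
    (χ : Finset ℕ → Fin N) : Prop :=
  ∀ V ∈ π, ∀ L : List (Finset ℕ), IsChainList π V L → red (L.map χ) ∈ T

/-- Extend a coloring of the blocks of `π` by a junk value. -/
def extendColor {N : ℕ} [NeZero N] (π : Blocks)
    (χ : {V : Finset ℕ // V ∈ π} → Fin N) : Finset ℕ → Fin N :=
  fun W => if h : W ∈ π then χ ⟨W, h⟩ else 0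

-- The right-hand side of the fixed-point identity for the cumulant
-- coefficients: `n^{−|π|} Σ_{χ ∈ X_w(π,T)} Π_{χ-components π'} a(π')`.
open Classical in
noncomputable def cumulantRHS {N : ℕ} [NeZero N] (n : ℕ) (T : Set (List (Fin N)))
    (a : Blocks → ℝ) (π : Blocks) : ℝ :=
  (∑ χ : ({V : Finset ℕ // V ∈ π} → Fin N),
      if WeaklyCompatible T π (extendColor π χ) then
        ∏ τ ∈ components π (extendColor π χ), a τ
      else 0) / (n : ℝ) ^ π.card

/-- `a` is a family of cumulant coefficients for `T`: normalized on one-block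
partitions, and satisfying the fixed-point identity for all non-crossing `π`. -/
def SatisfiesFP {N : ℕ} [NeZero N] (n : ℕ) (T : Set (List (Fin N)))
    (a : Blocks → ℝ) : Prop :=
  (∀ π : Blocks, IsNC π → π.card = 1 → a π = 1) ∧
  (∀ π : Blocks, IsNC π → a π = cumulantRHS n T a π)

/-- `π` is an interval partition: every block is order-convex within the ground set. -/
def IsIntervalPart (π : Blocks) : Prop :=
  ∀ B ∈ π, ∀ x ∈ B, ∀ z ∈ B, ∀ y ∈ π.biUnion id, x ≤ y → y ≤ z → y ∈ B

/-!
Within a concatenation `π = ⊔_{V ∈ σ} τ_V`, no block of `τ_V` is nested in a block of `τ_{V'}`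
for `V ≠ V'`, because `V` and `V'` are disjoint intervals. Hence every notion entering the
fixed-point identity for `π` — chains, immediate nesting, `χ`-components, weak compatibility —
splits into the corresponding notions for the `τ_V`. The summand of the identity is then a
product over `V ∈ σ` of the summands for the `τ_V`, the sum over colorings of `π` is a sum over
tuples of colorings of the `τ_V`, and `n^{|π|} = Π_V n^{|τ_V|}`.
-/

open Finset

section Coloring

variable {N : ℕ} {T : Set (List (Fin N))} {ρ : Blocks} {χ χ' : Finset ℕ → Fin N}

lemma IsChainList.mem {B : Finset ℕ} {L : List (Finset ℕ)} (hB : B ∈ ρ)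
    (hL : IsChainList ρ B L) : ∀ W ∈ L, W ∈ ρ := by
  obtain ⟨hhead, htail, -, -⟩ := hL
  cases L with
  | nil => simp
  | cons W L =>
    obtain rfl : W = B := by simpa using hhead
    rintro X (_ | ⟨_, hX⟩)
    exacts [hB, ((htail X).1 hX).1]

lemma sameComp.mem {B W : Finset ℕ} (hB : B ∈ ρ) (h : sameComp ρ χ B W) : W ∈ ρ := by
  induction h with
  | refl => exact hB
  | tail _ hstep _ => exact hstep.2.1

open Classical in
lemma mem_component_self {B : Finset ℕ} (hB : B ∈ ρ) : B ∈ component ρ χ B :=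
  mem_filter.2 ⟨hB, .refl⟩

lemma sameComp_congr (h : ∀ B ∈ ρ, χ B = χ' B) {V W : Finset ℕ} :
    sameComp ρ χ V W ↔ sameComp ρ χ' V W := by
  have hmono : ∀ {χ χ' : Finset ℕ → Fin N}, (∀ B ∈ ρ, χ B = χ' B) →
      sameComp ρ χ V W → sameComp ρ χ' V W := fun h =>
    Relation.ReflTransGen.mono (fun X Y ⟨hX, hY, hadj, hXY⟩ =>
      ⟨hX, hY, hadj, (h X hX).symm.trans (hXY.trans (h Y hY))⟩) _ _
  exact ⟨hmono h, hmono fun B hB => (h B hB).symm⟩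

lemma components_congr (h : ∀ B ∈ ρ, χ B = χ' B) : components ρ χ = components ρ χ' := by
  refine image_congr fun V _ => ?_
  ext W
  simp only [component, mem_filter, sameComp_congr h]

lemma weaklyCompatible_congr (h : ∀ B ∈ ρ, χ B = χ' B) :
    WeaklyCompatible T ρ χ ↔ WeaklyCompatible T ρ χ' := by
  refine forall₂_congr fun B hB => forall₂_congr fun L hL => ?_
  rw [List.map_congr_left fun W hW => h W (hL.mem hB W hW)]

open Classical in
lemma components_disjoint {ρ' : Blocks} (h : Disjoint ρ ρ') :
    Disjoint (components ρ χ) (components ρ' χ) := by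
  refine disjoint_left.2 fun C hC hC' => ?_
  obtain ⟨B, hB, rfl⟩ := mem_image.1 hC
  obtain ⟨B', -, hBB'⟩ := mem_image.1 hC'
  have hB' : B ∈ ρ' := filter_subset _ _ (hBB' ▸ mem_component_self hB)
  exact disjoint_left.1 h hB hB'

open Classical in
/-- The summand of the fixed-point identity, `𝟙[χ ∈ X_w(ρ,T)] Π_{χ-components ρ'} a(ρ')`. -/
noncomputable def cumulantTerm (T : Set (List (Fin N))) (a : Blocks → ℝ) (ρ : Blocks)
    (χ : Finset ℕ → Fin N) : ℝ :=
  if WeaklyCompatible T ρ χ then ∏ C ∈ components ρ χ, a C else 0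

open Classical in
lemma cumulantTerm_congr (a : Blocks → ℝ) (h : ∀ B ∈ ρ, χ B = χ' B) :
    cumulantTerm T a ρ χ = cumulantTerm T a ρ χ' := by
  rw [cumulantTerm, cumulantTerm, components_congr h]
  exact if_congr (weaklyCompatible_congr h) rfl rfl

lemma cumulantRHS_eq_sum_cumulantTerm [NeZero N] (n : ℕ) (a : Blocks → ℝ) (ρ : Blocks) :
    cumulantRHS n T a ρ =
      (∑ χ : {B // B ∈ ρ} → Fin N, cumulantTerm T a ρ (extendColor ρ χ)) / (n : ℝ) ^ ρ.card :=
  rfl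

end Coloring

/-- `ρ ⊆ π` is a union of connected components of the nesting relation of `π`. -/
def IsNestingClosed (ρ π : Blocks) : Prop :=
  ρ ⊆ π ∧ ∀ B ∈ ρ, ∀ W ∈ π, NestedIn B W ∨ NestedIn W B → W ∈ ρ

namespace IsNestingClosed

variable {N : ℕ} {ρ π : Blocks} (h : IsNestingClosed ρ π) {χ : Finset ℕ → Fin N}
include h

lemma nestedIn_iff {B : Finset ℕ} (hB : B ∈ ρ) (W : Finset ℕ) :
    W ∈ π ∧ NestedIn B W ↔ W ∈ ρ ∧ NestedIn B W :=
  ⟨fun ⟨hW, hBW⟩ => ⟨h.2 B hB W hW (.inl hBW), hBW⟩, fun ⟨hW, hBW⟩ => ⟨h.1 hW, hBW⟩⟩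

lemma isChainList_iff {B : Finset ℕ} (hB : B ∈ ρ) (L : List (Finset ℕ)) :
    IsChainList π B L ↔ IsChainList ρ B L := by
  simp only [IsChainList, h.nestedIn_iff hB]

lemma immNested_iff {X : Finset ℕ} (hX : X ∈ ρ) (Y : Finset ℕ) :
    ImmNested π X Y ↔ ImmNested ρ X Y := by
  simp only [ImmNested, ← and_assoc, h.nestedIn_iff hX]

lemma adjBlocks_iff {X Y : Finset ℕ} (hX : X ∈ ρ) (hY : Y ∈ ρ) :
    AdjBlocks π X Y ↔ AdjBlocks ρ X Y :=
  or_congr (h.immNested_iff hX Y) (h.immNested_iff hY X)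

lemma sameComp_iff {B : Finset ℕ} (hB : B ∈ ρ) {W : Finset ℕ} :
    sameComp π χ B W ↔ sameComp ρ χ B W := by
  constructor
  · intro hBW
    induction hBW with
    | refl => exact .refl
    | tail _ hXY ih =>
      obtain ⟨-, hY, hadj, hXY⟩ := hXY
      have hX := ih.mem hB
      have hY : _ ∈ ρ := h.2 _ hX _ hY (hadj.imp (·.1) (·.1))
      exact ih.tail ⟨hX, hY, (h.adjBlocks_iff hX hY).1 hadj, hXY⟩
  · intro hBW
    induction hBW with
    | refl => exact .refl
    | tail _ hXY ih =>
      obtain ⟨hX, hY, hadj, hXY⟩ := hXY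
      exact ih.tail ⟨h.1 hX, h.1 hY, (h.adjBlocks_iff hX hY).2 hadj, hXY⟩

lemma component_eq {B : Finset ℕ} (hB : B ∈ ρ) : component π χ B = component ρ χ B := by
  ext W
  simp only [component, mem_filter, h.sameComp_iff hB]
  exact ⟨fun ⟨_, hBW⟩ => ⟨hBW.mem hB, hBW⟩, fun ⟨hW, hBW⟩ => ⟨h.1 hW, hBW⟩⟩

end IsNestingClosed

section Decomposition

variable {N : ℕ} {σ : Blocks} {τ : Finset ℕ → Blocks}
  (hcl : ∀ V ∈ σ, IsNestingClosed (τ V) (σ.biUnion τ)) (χ : Finset ℕ → Fin N)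
include hcl

lemma weaklyCompatible_biUnion_iff (T : Set (List (Fin N))) :
    WeaklyCompatible T (σ.biUnion τ) χ ↔ ∀ V ∈ σ, WeaklyCompatible T (τ V) χ := by
  simp only [WeaklyCompatible, mem_biUnion]
  constructor
  · exact fun hwc V hV B hB L hL => hwc B ⟨V, hV, hB⟩ L (((hcl V hV).isChainList_iff hB L).2 hL)
  · rintro hwc B ⟨V, hV, hB⟩ L hL
    exact hwc V hV B hB L (((hcl V hV).isChainList_iff hB L).1 hL)

lemma components_biUnion :
    components (σ.biUnion τ) χ = σ.biUnion fun V => components (τ V) χ := by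
  rw [components, biUnion_image]
  exact biUnion_congr rfl fun V hV => image_congr fun B hB => (hcl V hV).component_eq hB

lemma cumulantTerm_biUnion (hdisj : (σ : Set (Finset ℕ)).PairwiseDisjoint τ)
    (T : Set (List (Fin N))) (a : Blocks → ℝ) :
    cumulantTerm T a (σ.biUnion τ) χ = ∏ V ∈ σ, cumulantTerm T a (τ V) χ := by
  by_cases hwc : ∀ V ∈ σ, WeaklyCompatible T (τ V) χ
  · rw [cumulantTerm, if_pos ((weaklyCompatible_biUnion_iff hcl χ T).2 hwc),
      components_biUnion hcl, prod_biUnion fun V hV V' hV' hne =>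
        components_disjoint (hdisj hV hV' hne)]
    exact prod_congr rfl fun V hV => (if_pos (hwc V hV)).symm
  · simp only [not_forall] at hwc
    obtain ⟨V, hV, hV_not⟩ := hwc
    rw [cumulantTerm, if_neg fun hwc => hV_not ((weaklyCompatible_biUnion_iff hcl χ T).1 hwc V hV),
      prod_eq_zero hV (if_neg hV_not)]

end Decomposition

section ColoringSum

variable {N : ℕ} {σ : Blocks} {τ : Finset ℕ → Blocks}

noncomputable def sigmaBlocksEquiv (hdisj : (σ : Set (Finset ℕ)).PairwiseDisjoint τ) :
    (Σ V : {V // V ∈ σ}, {B // B ∈ τ V}) ≃ {B // B ∈ σ.biUnion τ} :=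
  .ofBijective (fun x => ⟨x.2, mem_biUnion.2 ⟨x.1, x.1.2, x.2.2⟩⟩) <| by
    constructor
    · rintro ⟨⟨V, hV⟩, ⟨B, hB⟩⟩ ⟨⟨V', hV'⟩, ⟨B', hB'⟩⟩ hxy
      obtain rfl : B = B' := congrArg Subtype.val hxy
      obtain rfl : V = V' := by
        by_contra hne
        exact disjoint_left.1 (hdisj hV hV' hne) hB hB'
      rfl
    · rintro ⟨B, hB⟩
      obtain ⟨V, hV, hBV⟩ := mem_biUnion.1 hB
      exact ⟨⟨⟨V, hV⟩, ⟨B, hBV⟩⟩, rfl⟩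

noncomputable def restrictColorEquiv (hdisj : (σ : Set (Finset ℕ)).PairwiseDisjoint τ) :
    ({B // B ∈ σ.biUnion τ} → Fin N) ≃ ∀ V : {V // V ∈ σ}, {B // B ∈ τ V} → Fin N :=
  ((sigmaBlocksEquiv hdisj).arrowCongr (.refl _)).symm.trans (.piCurry fun _ _ => Fin N)

lemma sum_prod_extendColor_biUnion [NeZero N] {R : Type*} [CommSemiring R]
    (hdisj : (σ : Set (Finset ℕ)).PairwiseDisjoint τ) (F : Finset ℕ → (Finset ℕ → Fin N) → R)
    (hF : ∀ V ∈ σ, ∀ χ χ' : Finset ℕ → Fin N, (∀ B ∈ τ V, χ B = χ' B) → F V χ = F V χ') :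
    ∑ χ : {B // B ∈ σ.biUnion τ} → Fin N, ∏ V ∈ σ, F V (extendColor (σ.biUnion τ) χ) =
      ∏ V ∈ σ, ∑ χ : {B // B ∈ τ V} → Fin N, F V (extendColor (τ V) χ) := by
  rw [← prod_coe_sort σ, Fintype.prod_sum]
  refine Fintype.sum_equiv (restrictColorEquiv hdisj) _ _ fun χ => ?_
  rw [← prod_coe_sort σ]
  refine prod_congr rfl fun V _ => hF V V.2 _ _ fun B hB => ?_
  simp only [extendColor, dif_pos hB, dif_pos (mem_biUnion.2 ⟨V.1, V.2, hB⟩)]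
  rfl

end ColoringSum

lemma IsIntervalPart.eq_of_le_of_le {σ : Blocks} (hσint : IsIntervalPart σ) (hσ : IsNC σ)
    {V V' : Finset ℕ} (hV : V ∈ σ) (hV' : V' ∈ σ) {x j k : ℕ} (hx : x ∈ V) (hj : j ∈ V')
    (hk : k ∈ V') (hjx : j ≤ x) (hxk : x ≤ k) : V = V' := by
  have hxV' : x ∈ V' := hσint V' hV' j hj k hk x (mem_biUnion.2 ⟨V, hV, hx⟩) hjx hxk
  by_contra hne
  exact disjoint_left.1 (hσ.2.1 V hV V' hV' hne) hx hxV'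

section Concatenation

variable {σ : Blocks} {τ : Finset ℕ → Blocks} (hσ : IsNC σ)
  (hτ : ∀ V ∈ σ, IsNC (τ V) ∧ ∀ B ∈ τ V, B ⊆ V)
include hσ hτ

lemma pairwiseDisjoint_concat : (σ : Set (Finset ℕ)).PairwiseDisjoint τ := by
  intro V hV V' hV' hne
  refine disjoint_left.2 fun B hB hB' => ?_
  obtain ⟨x, hx⟩ := (hτ V hV).1.1 B hB
  exact disjoint_left.1 (hσ.2.1 V hV V' hV' hne) ((hτ V hV).2 B hB hx) ((hτ V' hV').2 B hB' hx)

variable (hσint : IsIntervalPart σ)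
include hσint

lemma eq_of_nestedIn_concat {V V' B W : Finset ℕ} (hV : V ∈ σ) (hV' : V' ∈ σ)
    (hB : B ∈ τ V) (hW : W ∈ τ V') (hBW : NestedIn B W) : V = V' := by
  obtain ⟨j, hj, k, hk, hjk⟩ := hBW
  obtain ⟨x, hx⟩ := (hτ V hV).1.1 B hB
  exact hσint.eq_of_le_of_le hσ hV hV' ((hτ V hV).2 B hB hx) ((hτ V' hV').2 W hW hj)
    ((hτ V' hV').2 W hW hk) (hjk x hx).1.le (hjk x hx).2.le

lemma isNestingClosed_concat {V : Finset ℕ} (hV : V ∈ σ) :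
    IsNestingClosed (τ V) (σ.biUnion τ) := by
  refine ⟨subset_biUnion_of_mem τ hV, fun B hB W hW hnest => ?_⟩
  obtain ⟨V', hV', hW'⟩ := mem_biUnion.1 hW
  obtain rfl : V = V' := hnest.elim (eq_of_nestedIn_concat hσ hτ hσint hV hV' hB hW')
    (fun h => (eq_of_nestedIn_concat hσ hτ hσint hV' hV hW' hB h).symm)
  exact hW'

lemma isNC_concat : IsNC (σ.biUnion τ) := by
  simp only [IsNC, mem_biUnion]
  refine ⟨fun B ⟨V, hV, hB⟩ => (hτ V hV).1.1 B hB, ?_, ?_⟩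
  · rintro B ⟨V, hV, hB⟩ C ⟨V', hV', hC⟩ hBC
    obtain rfl | hne := eq_or_ne V V'
    · exact (hτ V hV).1.2.1 B hB C hC hBC
    · exact (hσ.2.1 V hV V' hV' hne).mono ((hτ V hV).2 B hB) ((hτ V' hV').2 C hC)
  · rintro B ⟨V, hV, hB⟩ C ⟨V', hV', hC⟩ hBC hcross
    obtain rfl | hne := eq_or_ne V V'
    · exact (hτ V hV).1.2.2 B hB C hC hBC hcross
    · obtain ⟨i₁, j₁, i₂, -, h₁, h₂, -, hi₁, hi₂, hj₁, -⟩ := hcross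
      exact hne (hσint.eq_of_le_of_le hσ hV' hV ((hτ V' hV').2 C hC hj₁)
        ((hτ V hV).2 B hB hi₁) ((hτ V hV).2 B hB hi₂) h₁.le h₂.le).symm

end Concatenation

theorem stmt14_general {N : ℕ} [NeZero N] (n : ℕ)
    (T : Set (List (Fin N)))
    (σ : Blocks) (hσNC : IsNC σ) (hσint : IsIntervalPart σ)
    (τ : Finset ℕ → Blocks)
    (hτ : ∀ V ∈ σ, IsNC (τ V) ∧ (∀ B ∈ τ V, B ⊆ V) ∧ (τ V).biUnion id = V)
    (a : Blocks → ℝ) (ha : SatisfiesFP n T a) :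
    a (σ.biUnion τ) = ∏ V ∈ σ, a (τ V) := by
  have hτ' : ∀ V ∈ σ, IsNC (τ V) ∧ ∀ B ∈ τ V, B ⊆ V := fun V hV => ⟨(hτ V hV).1, (hτ V hV).2.1⟩
  have hdisj := pairwiseDisjoint_concat hσNC hτ'
  have hcl := fun V hV => isNestingClosed_concat hσNC hτ' hσint (V := V) hV
  rw [ha.2 _ (isNC_concat hσNC hτ' hσint), prod_congr rfl fun V hV => ha.2 _ (hτ V hV).1]
  simp only [cumulantRHS_eq_sum_cumulantTerm, cumulantTerm_biUnion hcl _ hdisj]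
  rw [prod_div_distrib, prod_pow_eq_pow_sum, card_biUnion hdisj,
    sum_prod_extendColor_biUnion hdisj _ fun V _ _ _ => cumulantTerm_congr a]

/-- Multiplicativity of the cumulant coefficients under concatenation: if `π` is
obtained by partitioning each consecutive interval block `V` of an interval
partition `σ` by a non-crossing partition `τ V`, then
`α_{T,π} = Π_{V ∈ σ} α_{T, τ V}`. -/
theorem stmt14 {N : ℕ} [NeZero N] (n : ℕ) (hn2 : 2 ≤ n)
    (T : Set (List (Fin N))) (hT : IsRootedSubtree T)
    (hn : {j : Fin N | [j] ∈ T}.ncard = n)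
    (σ : Blocks) (hσNC : IsNC σ) (hσint : IsIntervalPart σ)
    (τ : Finset ℕ → Blocks)
    (hτ : ∀ V ∈ σ, IsNC (τ V) ∧ (∀ B ∈ τ V, B ⊆ V) ∧ (τ V).biUnion id = V)
    (a : Blocks → ℝ) (ha : SatisfiesFP n T a) :
    a (σ.biUnion τ) = ∏ V ∈ σ, a (τ V) :=
  stmt14_general n T σ hσNC hσint τ hτ a ha
end
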